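/- Let R (N×N), Q (N×M), S (M×N) be constant real matrices. Let X : ℝ² → (N×N real matrices) be infinitely differentiable with X(x,y) invertible for all (x,y), and Y : ℝ² → (M×N real matrices) infinitely differentiable, satisfying X_x = R·X + Q·Y, Y_x = S·X, X_y = X_xx and Y_y = Y_xx. Then φ := Y·X⁻¹ satisfies the opposite Burgers equation with product Q: φ_y = −φ_xx − 2 φ Q φ_x. -/

import Mathlib

attribute [local instance] Matrix.normedAddCommGroup Matrix.normedSpace


/-- Partial derivative in the `x`-direction of a function of two real variables. -/
noncomputable def pdx {E : Type*} [NormedAddCommGroup E] [NormedSpace ℝ E]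
    (f : ℝ × ℝ → E) : ℝ × ℝ → E :=
  fun p => fderiv ℝ f p (1, 0)

/-- Partial derivative in the `y`-direction of a function of two real variables. -/
noncomputable def pdy {E : Type*} [NormedAddCommGroup E] [NormedSpace ℝ E]
    (f : ℝ × ℝ → E) : ℝ × ℝ → E :=
  fun p => fderiv ℝ f p (0, 1)

/-!
Write `Y = φ X`. The first equation becomes `X_x = (R + Qφ) X`, and cancelling `X` in
`(φ X)_x = S X` gives the matrix Riccati equation `φ_x = S - φ (R + Qφ)`, whose derivative is
`φ_xx = -φ_x (R + Qφ) - φ Q φ_x`. The Leibniz rule for the heat operator,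
`(φX)_y - (φX)_xx = (φ_y - φ_xx) X + φ (X_y - X_xx) - 2 φ_x X_x`, together with the heat
equations for `X` and `Y` leaves `(φ_y - φ_xx) X = 2 φ_x (R + Qφ) X`; substituting `φ_xx` and
cancelling `X` is the opposite Burgers equation.
-/

open Matrix

section MatrixCalculus

variable {E : Type*} [NormedAddCommGroup E] [NormedSpace ℝ E] {l m n : Type*}
  [Fintype l] [Fintype m] [Fintype n] {x : E}

omit [Fintype m] in
theorem differentiableAt_matrix_iff {f : E → Matrix m n ℝ} :
    DifferentiableAt ℝ f x ↔ ∀ i j, DifferentiableAt ℝ (fun y => f y i j) x :=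
  differentiableAt_pi.trans (forall_congr' fun _ => differentiableAt_pi)

theorem DifferentiableAt.matrix_det [DecidableEq n] {f : E → Matrix n n ℝ}
    (hf : DifferentiableAt ℝ f x) : DifferentiableAt ℝ (fun y => (f y).det) x := by
  simp only [det_apply']
  have hentry := differentiableAt_matrix_iff.1 hf
  fun_prop

theorem DifferentiableAt.matrix_adjugate [DecidableEq n] {f : E → Matrix n n ℝ}
    (hf : DifferentiableAt ℝ f x) : DifferentiableAt ℝ (fun y => (f y).adjugate) x := by
  refine differentiableAt_matrix_iff.2 fun i j => ?_
  simp only [adjugate_apply]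
  refine DifferentiableAt.matrix_det (differentiableAt_matrix_iff.2 fun k l => ?_)
  rcases eq_or_ne k j with rfl | hk
  · simp
  · simpa [updateRow_ne hk] using differentiableAt_matrix_iff.1 hf k l

theorem DifferentiableAt.matrix_inv [DecidableEq n] {f : E → Matrix n n ℝ}
    (hf : DifferentiableAt ℝ f x) (hx : IsUnit (f x)) :
    DifferentiableAt ℝ (fun y => (f y)⁻¹) x := by
  have hdet : (f x).det ≠ 0 := ((isUnit_iff_isUnit_det _).1 hx).ne_zero
  simp only [inv_def, Ring.inverse_eq_inv']
  exact (hf.matrix_det.inv hdet).smul hf.matrix_adjugate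

variable (l m n) in
noncomputable def Matrix.mulCLM : Matrix l m ℝ →L[ℝ] Matrix m n ℝ →L[ℝ] Matrix l n ℝ :=
  (mulLinearMap ℝ).toContinuousBilinearMap

@[fun_prop]
theorem DifferentiableAt.matrix_mul {f : E → Matrix l m ℝ} {g : E → Matrix m n ℝ}
    (hf : DifferentiableAt ℝ f x) (hg : DifferentiableAt ℝ g x) :
    DifferentiableAt ℝ (fun y => f y * g y) x :=
  ((mulCLM l m n).hasFDerivAt_of_bilinear hf.hasFDerivAt hg.hasFDerivAt).differentiableAt

theorem fderiv_matrix_mul_apply {f : E → Matrix l m ℝ} {g : E → Matrix m n ℝ}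
    (hf : DifferentiableAt ℝ f x) (hg : DifferentiableAt ℝ g x) (v : E) :
    fderiv ℝ (fun y => f y * g y) x v = fderiv ℝ f x v * g x + f x * fderiv ℝ g x v := by
  have h : HasFDerivAt (fun y => f y * g y) _ x :=
    (mulCLM l m n).hasFDerivAt_of_bilinear hf.hasFDerivAt hg.hasFDerivAt
  rw [h.fderiv, add_comm]
  rfl

end MatrixCalculus

section PartialDerivatives

variable {E : Type*} [NormedAddCommGroup E] [NormedSpace ℝ E]

theorem pdx_const_add (c : E) (f : ℝ × ℝ → E) (p : ℝ × ℝ) :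
    pdx (fun q => c + f q) p = pdx f p := by
  simp [pdx, fderiv_const_add]

theorem pdx_const_sub (c : E) (f : ℝ × ℝ → E) (p : ℝ × ℝ) :
    pdx (fun q => c - f q) p = -pdx f p := by
  simp [pdx, fderiv_const_sub]

variable {l m n : Type*} [Fintype l] [Fintype m] [Fintype n]

theorem pdx_mul {f : ℝ × ℝ → Matrix l m ℝ} {g : ℝ × ℝ → Matrix m n ℝ} {p : ℝ × ℝ}
    (hf : DifferentiableAt ℝ f p) (hg : DifferentiableAt ℝ g p) :
    pdx (fun q => f q * g q) p = pdx f p * g p + f p * pdx g p :=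
  fderiv_matrix_mul_apply hf hg _

theorem pdy_mul {f : ℝ × ℝ → Matrix l m ℝ} {g : ℝ × ℝ → Matrix m n ℝ} {p : ℝ × ℝ}
    (hf : DifferentiableAt ℝ f p) (hg : DifferentiableAt ℝ g p) :
    pdy (fun q => f q * g q) p = pdy f p * g p + f p * pdy g p :=
  fderiv_matrix_mul_apply hf hg _

theorem pdx_const_mul (C : Matrix l m ℝ) {g : ℝ × ℝ → Matrix m n ℝ} {p : ℝ × ℝ}
    (hg : DifferentiableAt ℝ g p) : pdx (fun q => C * g q) p = C * pdx g p := by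
  simpa [pdx] using pdx_mul (differentiableAt_const C) hg

theorem pdy_sub_pdx_pdx_mul {f : ℝ × ℝ → Matrix l m ℝ} {g : ℝ × ℝ → Matrix m n ℝ} {p : ℝ × ℝ}
    (hf : Differentiable ℝ f) (hg : Differentiable ℝ g)
    (hfx : DifferentiableAt ℝ (pdx f) p) (hgx : DifferentiableAt ℝ (pdx g) p) :
    pdy (fun q => f q * g q) p - pdx (pdx fun q => f q * g q) p
      = (pdy f p - pdx (pdx f) p) * g p + f p * (pdy g p - pdx (pdx g) p)
        - 2 • (pdx f p * pdx g p) := by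
  have hx : pdx (fun q => f q * g q) = fun q => pdx f q * g q + f q * pdx g q :=
    funext fun q => pdx_mul (hf q) (hg q)
  have hxx : pdx (fun q => pdx f q * g q + f q * pdx g q) p
      = pdx (pdx f) p * g p + pdx f p * pdx g p + (pdx f p * pdx g p + f p * pdx (pdx g) p) := by
    rw [pdx, fderiv_fun_add (hfx.matrix_mul (hg p)) ((hf p).matrix_mul hgx)]
    exact congrArg₂ (· + ·) (pdx_mul hfx (hg p)) (pdx_mul (hf p) hgx)
  rw [pdy_mul (hf p) (hg p), hx, hxx]
  simp only [Matrix.sub_mul, Matrix.mul_sub, two_smul]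
  abel

end PartialDerivatives

section Riccati

variable {m n : Type*} [Fintype m] [Fintype n]
  {R : Matrix n n ℝ} {Q : Matrix n m ℝ} {S : Matrix m n ℝ}
  {X : ℝ × ℝ → Matrix n n ℝ} {φ : ℝ × ℝ → Matrix m n ℝ}

theorem pdx_eq_riccati [DecidableEq n] {p : ℝ × ℝ} (hX : DifferentiableAt ℝ X p)
    (hφ : DifferentiableAt ℝ φ p) (hXp : IsUnit (X p)) (hXx : pdx X p = (R + Q * φ p) * X p)
    (hφXx : pdx (fun q => φ q * X q) p = S * X p) :
    pdx φ p = S - φ p * (R + Q * φ p) := by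
  let _ := hXp.invertible
  refine (Matrix.mul_left_inj_of_invertible (X p)).1 ?_
  rw [pdx_mul hφ hX, hXx] at hφXx
  rw [Matrix.sub_mul, ← hφXx, Matrix.mul_assoc]
  abel

theorem pdx_pdx_of_riccati (hφ : Differentiable ℝ φ)
    (hric : ∀ q, pdx φ q = S - φ q * (R + Q * φ q)) (p : ℝ × ℝ) :
    pdx (pdx φ) p = -(pdx φ p * (R + Q * φ p)) - φ p * Q * pdx φ p := by
  have hA : DifferentiableAt ℝ (fun q => R + Q * φ q) p := by fun_prop
  have hAx : pdx (fun q => R + Q * φ q) p = Q * pdx φ p := by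
    rw [pdx_const_add, pdx_const_mul Q (hφ p)]
  calc pdx (pdx φ) p = pdx (fun q => S - φ q * (R + Q * φ q)) p :=
        congrArg (pdx · p) (funext hric)
    _ = -(pdx φ p * (R + Q * φ p)) - φ p * Q * pdx φ p := by
      rw [pdx_const_sub, pdx_mul (hφ p) hA, hAx, Matrix.mul_assoc, neg_add]
      abel

end Riccati

/-- `L = 0` specialization of the Riccati construction: if `X_x = R X + Q Y`,
`Y_x = S X`, and `X`, `Y` solve the heat equation, then `φ = Y X⁻¹` solves the
opposite Burgers equation with product `Q`: `φ_y = -φ_xx - 2 φ Q φ_x`. -/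
theorem opposite_burgers_of_riccati (M N : ℕ)
    (R : Matrix (Fin N) (Fin N) ℝ) (Q : Matrix (Fin N) (Fin M) ℝ)
    (S : Matrix (Fin M) (Fin N) ℝ)
    (X : ℝ × ℝ → Matrix (Fin N) (Fin N) ℝ)
    (Y : ℝ × ℝ → Matrix (Fin M) (Fin N) ℝ)
    (hX : ContDiff ℝ (⊤ : ℕ∞) X) (hY : ContDiff ℝ (⊤ : ℕ∞) Y)
    (hXinv : ∀ p, IsUnit (X p))
    (hX1 : ∀ p, pdx X p = R * X p + Q * Y p)
    (hY1 : ∀ p, pdx Y p = S * X p)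
    (hX2 : ∀ p, pdy X p = pdx (pdx X) p)
    (hY2 : ∀ p, pdy Y p = pdx (pdx Y) p)
    (φ : ℝ × ℝ → Matrix (Fin M) (Fin N) ℝ)
    (hφ : ∀ p, φ p = Y p * (X p)⁻¹) :
    ∀ p, pdy φ p = - pdx (pdx φ) p - 2 • (φ p * Q * pdx φ p) := by
  have hXd : Differentiable ℝ X := hX.differentiable (by simp)
  have hYd : Differentiable ℝ Y := hY.differentiable (by simp)
  have hYφ : Y = fun q => φ q * X q := funext fun q => by
    rw [hφ, nonsing_inv_mul_cancel_right _ _ ((isUnit_iff_isUnit_det _).1 (hXinv q))]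
  have hφd : Differentiable ℝ φ :=
    funext hφ ▸ fun q => (hYd q).matrix_mul ((hXd q).matrix_inv (hXinv q))
  have hXx q : pdx X q = (R + Q * φ q) * X q := by rw [hX1, hYφ, Matrix.add_mul, Matrix.mul_assoc]
  have hric q : pdx φ q = S - φ q * (R + Q * φ q) :=
    pdx_eq_riccati (hXd q) (hφd q) (hXinv q) (hXx q) (hYφ ▸ hY1 q)
  have hφxd : Differentiable ℝ (pdx φ) := funext hric ▸ fun q => by fun_prop
  have hXxd : Differentiable ℝ (pdx X) := funext hX1 ▸ fun q => by fun_prop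
  intro p
  have hleibniz := pdy_sub_pdx_pdx_mul hφd hXd (hφxd p) (hXxd p)
  rw [← hYφ, hY2, hX2, sub_self, sub_self, Matrix.mul_zero, add_zero, hXx,
    pdx_pdx_of_riccati hφd hric] at hleibniz
  let _ := (hXinv p).invertible
  refine (Matrix.mul_left_inj_of_invertible (X p)).1 ?_
  rw [pdx_pdx_of_riccati hφd hric, ← sub_eq_zero, hleibniz]
  simp only [Matrix.sub_mul, Matrix.neg_mul, Matrix.add_mul, Matrix.mul_add, Matrix.mul_assoc,
    two_smul]
  abel
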